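/- Let n ≥ 3, p, m be integers with 1 ≤ p, 2p ≤ n and m ≥ 1. Let k(j,i), for 1 ≤ j ≤ m and 1 ≤ i ≤ n, be real numbers such that Σᵢ k(j,i) = 0 for every j. If Σ_{j=1}^m ( min over subsets a ⊆ {1,…,n} with |a| = p of K_a(k_j)·K_{⋆a}(k_j) ) = −(p(n−p)/n)·Σ_{j=1}^m Σ_{i=1}^n k(j,i)², then for each j there exist a subset a_j ⊆ {1,…,n} with |a_j| = p and real numbers λ_j, μ_j such that k(j,i) = λ_j for i ∈ a_j and k(j,i) = μ_j for i ∉ a_j. -/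

import Mathlib

/-!
For a sum-zero vector `k`, the partial sum `K_a(k)` is the inner product of `k` with the centred
indicator `1_a - #a/n`, whose squared norm is `#a (n - #a) / n`, and `K_a K_{⋆a} = -K_a²`.
Cauchy–Schwarz therefore bounds every term of the minimum from below by
`-(p (n - p) / n) ∑ᵢ kᵢ²`, so equality of the sums forces equality for each `j` and for a
minimising `a`. Equality in Cauchy–Schwarz makes `k_j` a multiple of the centred indicator of `a`,
which takes one value on `a` and another off it.
-/

open Finset

namespace Finset

variable {ι : Type*} (s : Finset ι) (f g : ι → ℝ)

lemma sum_sq_sub_eq_mul_sub_sq :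
    ∑ i ∈ s, ((∑ j ∈ s, g j ^ 2) * f i - (∑ j ∈ s, f j * g j) * g i) ^ 2
      = (∑ j ∈ s, g j ^ 2) *
          ((∑ j ∈ s, f j ^ 2) * (∑ j ∈ s, g j ^ 2) - (∑ j ∈ s, f j * g j) ^ 2) := by
  set G := ∑ j ∈ s, g j ^ 2
  set P := ∑ j ∈ s, f j * g j
  have expand : ∀ i ∈ s, (G * f i - P * g i) ^ 2
      = G ^ 2 * f i ^ 2 - 2 * G * P * (f i * g i) + P ^ 2 * g i ^ 2 := fun i _ ↦ by ring
  rw [sum_congr rfl expand, sum_add_distrib, sum_sub_distrib, ← mul_sum, ← mul_sum, ← mul_sum]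
  ring

lemma mul_eq_mul_of_sum_mul_sq_eq
    (h : (∑ i ∈ s, f i * g i) ^ 2 = (∑ i ∈ s, f i ^ 2) * ∑ i ∈ s, g i ^ 2) :
    ∀ i ∈ s, (∑ j ∈ s, g j ^ 2) * f i = (∑ j ∈ s, f j * g j) * g i := by
  have hzero := sum_sq_sub_eq_mul_sub_sq s f g
  rw [h, sub_self, mul_zero, sum_eq_zero_iff_of_nonneg fun _ _ ↦ sq_nonneg _] at hzero
  exact fun i hi ↦ sub_eq_zero.mp (pow_eq_zero_iff two_ne_zero |>.mp (hzero i hi))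

end Finset

section CenteredIndicator

variable {ι : Type*} [Fintype ι] [DecidableEq ι]

noncomputable def centeredIndicator (a : Finset ι) (i : ι) : ℝ :=
  (if i ∈ a then 1 else 0) - #a / Fintype.card ι

lemma sum_mul_centeredIndicator {k : ι → ℝ} (hk : ∑ i, k i = 0) (a : Finset ι) :
    ∑ i, k i * centeredIndicator a i = ∑ i ∈ a, k i := by
  simp [centeredIndicator, mul_sub, sum_sub_distrib, ← sum_mul, hk]

lemma sum_centeredIndicator_sq (a : Finset ι) :
    ∑ i, centeredIndicator a i ^ 2 = #a * (Fintype.card ι - #a) / Fintype.card ι := by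
  rcases isEmpty_or_nonempty ι with hι | hι
  · simp
  have hN : (Fintype.card ι : ℝ) ≠ 0 := by positivity
  set N : ℝ := (Fintype.card ι : ℝ)
  have expand : ∀ i ∈ (univ : Finset ι), centeredIndicator a i ^ 2
      = (if i ∈ a then 1 else 0) * (1 - 2 * (#a / N)) + (#a / N) ^ 2 := fun i _ ↦ by
    by_cases hi : i ∈ a <;> simp [centeredIndicator, hi] <;> ring
  rw [sum_congr rfl expand, sum_add_distrib, ← sum_mul, sum_boole, sum_const,
    filter_mem_eq_inter, univ_inter, card_univ, nsmul_eq_mul]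
  field_simp
  ring

end CenteredIndicator

section SumZero

variable {ι : Type*} [Fintype ι] [DecidableEq ι] {k : ι → ℝ}

lemma sum_mul_sum_compl_eq_neg_sq (hk : ∑ i, k i = 0) (a : Finset ι) :
    (∑ i ∈ a, k i) * ∑ i ∈ aᶜ, k i = -(∑ i ∈ a, k i) ^ 2 := by
  have hsplit := sum_add_sum_compl a k
  rw [hk] at hsplit
  rw [eq_neg_of_add_eq_zero_right hsplit]
  ring

lemma sq_sum_le_of_sum_eq_zero (hk : ∑ i, k i = 0) (a : Finset ι) :
    (∑ i ∈ a, k i) ^ 2 ≤ #a * (Fintype.card ι - #a) / Fintype.card ι * ∑ i, k i ^ 2 := by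
  rw [← sum_mul_centeredIndicator hk, ← sum_centeredIndicator_sq, mul_comm]
  exact sum_mul_sq_le_sq_mul_sq _ _ _

lemma exists_eq_on_and_compl_of_sq_sum_eq (hk : ∑ i, k i = 0) {a : Finset ι}
    (ha : 0 < #a) (ha' : #a < Fintype.card ι)
    (h : (∑ i ∈ a, k i) ^ 2 = #a * (Fintype.card ι - #a) / Fintype.card ι * ∑ i, k i ^ 2) :
    ∃ lam mu : ℝ, (∀ i ∈ a, k i = lam) ∧ ∀ i ∉ a, k i = mu := by
  have hprop := mul_eq_mul_of_sum_mul_sq_eq univ k (centeredIndicator a)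
    (by rw [sum_mul_centeredIndicator hk, sum_centeredIndicator_sq, h, mul_comm])
  rw [sum_mul_centeredIndicator hk, sum_centeredIndicator_sq] at hprop
  set N : ℝ := (Fintype.card ι : ℝ)
  set B : ℝ := #a * (N - #a) / N
  set S := ∑ i ∈ a, k i
  have hB : 0 < B := by
    have hlt : (#a : ℝ) < N := Nat.cast_lt.mpr ha'
    have hpos : (0 : ℝ) < #a := Nat.cast_pos.mpr ha
    exact div_pos (mul_pos hpos (sub_pos.mpr hlt)) (hpos.trans hlt)
  refine ⟨S * (1 - #a / N) / B, S * -(#a / N) / B, fun i hi ↦ ?_, fun i hi ↦ ?_⟩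
  all_goals
    rw [eq_div_iff hB.ne', mul_comm, hprop i (mem_univ i)]
    simp [centeredIndicator, hi, N]

end SumZero

theorem bochner_equality_case_tracefree (n p m : ℕ) (hp : 1 ≤ p)
    (hpn : 2 * p ≤ n)
    (k : Fin m → Fin n → ℝ)
    (hj : ∀ j : Fin m, ∑ i, k j i = 0)
    (heq : ∑ j, (Finset.univ.powersetCard p).inf'
        (Finset.powersetCard_nonempty.mpr
          (by simp only [Finset.card_univ, Fintype.card_fin]; omega))
        (fun a => (∑ i ∈ a, k j i) * (∑ i ∈ aᶜ, k j i))
      = -((p : ℝ) * ((n : ℝ) - (p : ℝ)) / (n : ℝ)) * ∑ j, ∑ i, (k j i) ^ 2) :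
    ∀ j : Fin m, ∃ a : Finset (Fin n), a.card = p ∧ ∃ lam mu : ℝ,
      (∀ i ∈ a, k j i = lam) ∧ (∀ i ∉ a, k j i = mu) := by
  set B : ℝ := p * (n - p) / n
  set A := (univ : Finset (Fin n)).powersetCard p
  have hA : A.Nonempty :=
    powersetCard_nonempty.mpr (by simp only [card_univ, Fintype.card_fin]; omega)
  have hB_card : ∀ a ∈ A, B = #a * (Fintype.card (Fin n) - #a) / Fintype.card (Fin n) := by
    intro a ha
    rw [mem_powersetCard_univ.mp ha, Fintype.card_fin]
  have hlow : ∀ j, ∀ a ∈ A,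
      -(B * ∑ i, k j i ^ 2) ≤ (∑ i ∈ a, k j i) * ∑ i ∈ aᶜ, k j i := by
    intro j a ha
    rw [sum_mul_sum_compl_eq_neg_sq (hj j), neg_le_neg_iff, hB_card a ha]
    exact sq_sum_le_of_sum_eq_zero (hj j) a
  have hmin : ∀ j, A.inf' hA (fun a ↦ (∑ i ∈ a, k j i) * ∑ i ∈ aᶜ, k j i)
      = -(B * ∑ i, k j i ^ 2) := by
    have hsum : ∑ j, -(B * ∑ i, k j i ^ 2)
        = ∑ j, A.inf' hA (fun a ↦ (∑ i ∈ a, k j i) * ∑ i ∈ aᶜ, k j i) := by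
      rw [heq, mul_sum]
      simp only [neg_mul]
    intro j
    exact ((sum_eq_sum_iff_of_le fun j _ ↦ le_inf' _ _ (hlow j)).mp hsum j (mem_univ j)).symm
  intro j
  obtain ⟨a, ha, hval⟩ :=
    exists_mem_eq_inf' hA (fun a ↦ (∑ i ∈ a, k j i) * ∑ i ∈ aᶜ, k j i)
  have hcard : #a = p := mem_powersetCard_univ.mp ha
  have hsq : (∑ i ∈ a, k j i) ^ 2 = B * ∑ i, k j i ^ 2 := by
    rw [← neg_inj, ← sum_mul_sum_compl_eq_neg_sq (hj j), ← hval, hmin j]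
  rw [hB_card a ha] at hsq
  have hlt : #a < Fintype.card (Fin n) := by rw [hcard, Fintype.card_fin]; omega
  exact ⟨a, hcard, exists_eq_on_and_compl_of_sq_sum_eq (hj j) (by omega) hlt hsq⟩
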